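/- Assume X > 0. For every x ≥ 0 and every h > 0, the derivative of the map h ↦ SIR1(x,h) equals (2·p_t·h/(p_M·(x² + h²)²))·(2·X·x − X² − Y²); consequently this derivative is nonnegative if and only if x ≥ Ψʰ, where Ψʰ = (X² + Y²)/(2·X). -/

import Mathlib

/-- SIR at the UAV located at (x,0,h). -/
noncomputable def SIR1 (pt pM X Y x h : ℝ) : ℝ :=
  pt * ((x - X) ^ 2 + Y ^ 2 + h ^ 2) / (pM * (x ^ 2 + h ^ 2))

/-- The threshold Ψʰ. -/
noncomputable def PsiH (X Y : ℝ) : ℝ := (X ^ 2 + Y ^ 2) / (2 * X)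

/-!
Since `(x - X)² + Y² + h² = (x² + h²) - (2 X x - X² - Y²)`, the ratio is
`SIR1 = (pt / pM) * (1 - (2 X x - X² - Y²) / (x² + h²))`, so as a function of the height it is
monotone with the sign of `2 X x - X² - Y²`; for `X > 0` that sign is the sign of `x - Ψʰ`.
-/

theorem hasDerivAt_SIR1 {pt pM X Y x h : ℝ} (hpM : pM ≠ 0) (hxh : x ^ 2 + h ^ 2 ≠ 0) :
    HasDerivAt (fun t => SIR1 pt pM X Y x t)
      (2 * pt * h / (pM * (x ^ 2 + h ^ 2) ^ 2) * (2 * X * x - X ^ 2 - Y ^ 2)) h := by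
  have hnum : HasDerivAt (fun t : ℝ => pt * ((x - X) ^ 2 + Y ^ 2 + t ^ 2)) (pt * (2 * h)) h := by
    simpa using ((hasDerivAt_pow 2 h).const_add ((x - X) ^ 2 + Y ^ 2)).const_mul pt
  have hden : HasDerivAt (fun t : ℝ => pM * (x ^ 2 + t ^ 2)) (pM * (2 * h)) h := by
    simpa using ((hasDerivAt_pow 2 h).const_add (x ^ 2)).const_mul pM
  refine (hnum.div hden (mul_ne_zero hpM hxh)).congr_deriv ?_
  field_simp
  ring

theorem sub_nonneg_iff_PsiH_le {X Y x : ℝ} (hX : 0 < X) :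
    0 ≤ 2 * X * x - X ^ 2 - Y ^ 2 ↔ PsiH X Y ≤ x := by
  rw [PsiH, div_le_iff₀ (by positivity), sub_sub, sub_nonneg, mul_comm x]

theorem stmt2_general (X Y pt pM : ℝ)
    (hX : 0 < X) (hpt : 0 < pt) (hpM : 0 < pM) :
    ∀ x : ℝ, 0 ≤ x → ∀ h : ℝ, 0 < h →
      HasDerivAt (fun t => SIR1 pt pM X Y x t)
        (2 * pt * h / (pM * (x ^ 2 + h ^ 2) ^ 2) * (2 * X * x - X ^ 2 - Y ^ 2)) h ∧
      (0 ≤ 2 * pt * h / (pM * (x ^ 2 + h ^ 2) ^ 2) * (2 * X * x - X ^ 2 - Y ^ 2) ↔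
        x ≥ PsiH X Y) := by
  intro x _ h hh
  refine ⟨hasDerivAt_SIR1 hpM.ne' (by positivity), ?_⟩
  rw [mul_nonneg_iff_of_pos_left (by positivity), sub_nonneg_iff_PsiH_le hX, ge_iff_le]

theorem stmt2 (D X Y pt pu pM : ℝ) (hD : 0 < D) (hX0 : 0 ≤ X) (hXD : X ≤ D)
    (hX : 0 < X) (hpt : 0 < pt) (hpu : 0 < pu) (hpM : 0 < pM) :
    ∀ x : ℝ, 0 ≤ x → ∀ h : ℝ, 0 < h →
      HasDerivAt (fun t => SIR1 pt pM X Y x t)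
        (2 * pt * h / (pM * (x ^ 2 + h ^ 2) ^ 2) * (2 * X * x - X ^ 2 - Y ^ 2)) h ∧
      (0 ≤ 2 * pt * h / (pM * (x ^ 2 + h ^ 2) ^ 2) * (2 * X * x - X ^ 2 - Y ^ 2) ↔
        x ≥ PsiH X Y) :=
  stmt2_general X Y pt pM hX hpt hpM
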